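/- Let G and H be simple graphs on finite vertex types, with |V(H)| = n₂, and let G[H] be their lexicographic product. Then for all vertices u of G and v of H, dp_{G[H]}((u,v)) = (∑_{u' ∈ N_G(u)} X^{n₂ · deg_G(u')}) · dp(H) + X^{n₂ · deg_G(u)} · dp_H(v) in ℕ[X]. -/

import Mathlib

open Polynomial

/-- The neighbor finset of a vertex (with classical decidability of adjacency). -/
noncomputable def nbhd {V : Type*} [Fintype V] (G : SimpleGraph V) (v : V) : Finset V :=
  letI := Classical.decRel G.Adj
  G.neighborFinset v

/-- The degree of a vertex (with classical decidability of adjacency). -/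
noncomputable def degc {V : Type*} [Fintype V] (G : SimpleGraph V) (v : V) : ℕ :=
  (nbhd G v).card

/-- The degree polynomial of a vertex `v`: the coefficient of `X^i` is the number
of neighbors of `v` having degree `i`. -/
noncomputable def dp {V : Type*} [Fintype V] (G : SimpleGraph V) (v : V) : ℕ[X] :=
  ∑ w ∈ nbhd G v, X ^ degc G w

/-- The degree polynomial of a graph `G`: the coefficient of `X^i` is the number
of vertices of `G` of degree `i`. -/
noncomputable def dpG {V : Type*} [Fintype V] (G : SimpleGraph V) : ℕ[X] :=
  ∑ v, X ^ degc G v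

/-- The lexicographic product `G[H]` of two simple graphs. -/
def lexProd {α β : Type*} (G : SimpleGraph α) (H : SimpleGraph β) :
    SimpleGraph (α × β) where
  Adj x y := G.Adj x.1 y.1 ∨ (x.1 = y.1 ∧ H.Adj x.2 y.2)
  symm := by
    constructor
    rintro ⟨a, b⟩ ⟨c, d⟩ (h | ⟨rfl, h⟩)
    · exact Or.inl h.symm
    · exact Or.inr ⟨rfl, h.symm⟩
  loopless := by
    constructor
    rintro ⟨a, b⟩ (h | ⟨-, h⟩)
    · exact G.loopless.irrefl a h
    · exact H.loopless.irrefl b h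

/-! The neighbourhood of `(u, v)` in `G[H]` is the disjoint union of `N_G(u) × V(H)` and
`{u} × N_H(v)`, and `(u', v')` has degree `n₂ · deg u' + deg v'`, so each monomial
`X ^ deg (u', v')` factors as `X ^ (n₂ · deg u') * X ^ deg v'`. -/

open Finset

lemma mem_nbhd {V : Type*} [Fintype V] (G : SimpleGraph V) {v w : V} :
    w ∈ nbhd G v ↔ G.Adj v w := by
  classical
  simp [nbhd]

section LexProd

variable {α β : Type*} [Fintype α] [Fintype β] (G : SimpleGraph α) (H : SimpleGraph β)

lemma disjoint_nbhd_lexProd (a : α) (b : β) :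
    Disjoint (nbhd G a ×ˢ (univ : Finset β)) ({a} ×ˢ nbhd H b) := by
  rw [disjoint_left]
  rintro ⟨c, d⟩ hc hd
  simp only [mem_product, mem_singleton, mem_nbhd] at hc hd
  exact G.loopless.irrefl a (hd.1 ▸ hc.1)

lemma nbhd_lexProd (a : α) (b : β) :
    nbhd (lexProd G H) (a, b) =
      (nbhd G a ×ˢ univ).disjUnion ({a} ×ˢ nbhd H b) (disjoint_nbhd_lexProd G H a b) := by
  ext ⟨c, d⟩
  simp only [mem_nbhd, mem_disjUnion, mem_product, mem_singleton, mem_univ,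
    and_true, lexProd, eq_comm]

lemma degc_lexProd (a : α) (b : β) :
    degc (lexProd G H) (a, b) = Fintype.card β * degc G a + degc H b := by
  rw [degc, nbhd_lexProd, card_disjUnion, card_product, card_product, card_univ,
    card_singleton, one_mul, degc, degc, mul_comm]

lemma sum_nbhd_lexProd {M : Type*} [AddCommMonoid M] (f : α × β → M) (a : α) (b : β) :
    ∑ x ∈ nbhd (lexProd G H) (a, b), f x =
      ∑ a' ∈ nbhd G a, ∑ b', f (a', b') + ∑ b' ∈ nbhd H b, f (a, b') := by
  rw [nbhd_lexProd, sum_disjUnion, sum_product, sum_product, sum_singleton]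

end LexProd

/-- Degree polynomial of a vertex of the lexicographic product:
`dp_{G[H]}((u,v)) = (dp_G(u))^{∧×n₂}·dp(H) + X^{n₂·deg u}·dp_H(v)`. -/
theorem dp_lexProd {α β : Type*} [Fintype α] [Fintype β]
    (G : SimpleGraph α) (H : SimpleGraph β) (u : α) (v : β) :
    dp (lexProd G H) (u, v)
      = (∑ u' ∈ nbhd G u, X ^ (Fintype.card β * degc G u')) * dpG H
        + X ^ (Fintype.card β * degc G u) * dp H v := by
  rw [dp, sum_nbhd_lexProd, sum_mul, dp, mul_sum]
  simp only [dpG, mul_sum, degc_lexProd, pow_add]
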